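/- arXiv:1106.0953 — 5 statements merged into one kernel-verified Lean document; each statement's English description precedes it below -/
import Mathlib

section
/- Assume n = |p₁q₂ − p₂q₁| ≠ 0. Then the order of the image of (1, 0) in the quotient group (ℤ × ℤ)/Λ equals n / gcd(|q₁|, |q₂|). (In the language of the paper: the translation u acts on the n points of the fundamental region by a permutation all of whose cycles have length n/μ_q, where μ_q = gcd(|q₁|, |q₂|).) -/
/-!
Write `qᵢ = g·uᵢ` with `g = gcd(q₁, q₂)` and `u₁, u₂` coprime. A point `a(p₁, q₁) + b(p₂, q₂)`
of `Λ` lies on the axis `ℤ × {0}` iff `a u₁ + b u₂ = 0`, i.e. `(a, b) = t(u₂, -u₁)`, so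
`Λ ∩ (ℤ × {0}) = e ℤ × {0}` with `e = p₁u₂ - p₂u₁ = (p₁q₂ - p₂q₁)/g`, and the order of `(1, 0)` is `|e|`.
-/

theorem exists_eq_mul_of_mul_add_mul_eq_zero {R : Type*} [CommRing R] {u v a b : R}
    (huv : IsCoprime u v) (h : a * u + b * v = 0) : ∃ t, a = t * v ∧ b = -(t * u) := by
  obtain ⟨x, y, hxy⟩ := huv
  exact ⟨a * y - b * x, by linear_combination x * h - a * hxy,
    by linear_combination y * h - b * hxy⟩

theorem addOrderOf_eq_natAbs_of_zsmul_eq_zero_iff {G : Type*} [AddGroup G] {x : G} {e : ℤ}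
    (h : ∀ k : ℤ, k • x = 0 ↔ e ∣ k) : addOrderOf x = e.natAbs := by
  have hdvd (k : ℤ) : (addOrderOf x : ℤ) ∣ k ↔ e ∣ k :=
    addOrderOf_dvd_iff_zsmul_eq_zero.trans (h k)
  exact Int.natAbs_eq_of_dvd_dvd ((hdvd e).2 dvd_rfl) ((hdvd _).1 dvd_rfl)

theorem mk_zero_mem_closure_pair_iff {p₁ p₂ u v g k : ℤ} (hg : g ≠ 0) (huv : IsCoprime u v) :
    ((k, 0) : ℤ × ℤ) ∈ AddSubgroup.closure {((p₁, u * g) : ℤ × ℤ), (p₂, v * g)} ↔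
      p₁ * v - p₂ * u ∣ k := by
  rw [AddSubgroup.mem_closure_pair]
  constructor
  · rintro ⟨a, b, hab⟩
    have hk : a * p₁ + b * p₂ = k := congrArg Prod.fst hab
    have hsnd : a * (u * g) + b * (v * g) = 0 := congrArg Prod.snd hab
    have hq : (a * u + b * v) * g = 0 := by linear_combination hsnd
    obtain ⟨t, rfl, rfl⟩ :=
      exists_eq_mul_of_mul_add_mul_eq_zero huv ((mul_eq_zero.1 hq).resolve_right hg)
    exact ⟨t, by rw [← hk]; ring⟩
  · rintro ⟨t, rfl⟩
    refine ⟨t * v, -(t * u), ?_⟩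
    ext <;> simp only [Prod.smul_mk, smul_eq_mul, Prod.mk_add_mk] <;> ring

/-- Let `Λ ≤ ℤ × ℤ` be generated by `(p₁, q₁)` and `(p₂, q₂)`, and assume
`n = |p₁q₂ − p₂q₁| ≠ 0`.  Then the order of the image of `(1, 0)` in `(ℤ × ℤ)/Λ`
equals `n / gcd(|q₁|, |q₂|)`. -/
theorem stmt5 (p₁ q₁ p₂ q₂ : ℤ) (hn : p₁ * q₂ - p₂ * q₁ ≠ 0) :
    addOrderOf ((QuotientAddGroup.mk ((1, 0) : ℤ × ℤ)) :
        (ℤ × ℤ) ⧸ AddSubgroup.closure {((p₁, q₁) : ℤ × ℤ), (p₂, q₂)})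
      = (p₁ * q₂ - p₂ * q₁).natAbs / Nat.gcd q₁.natAbs q₂.natAbs := by
  have hpos : 0 < Int.gcd q₁ q₂ := by
    refine Int.gcd_pos_iff.2 (not_and_or.1 fun ⟨h₁, h₂⟩ => hn ?_)
    rw [h₁, h₂]; ring
  obtain ⟨u, v, huv, hq₁, hq₂⟩ := Int.exists_gcd_one hpos
  change _ = _ / Int.gcd q₁ q₂
  generalize Int.gcd q₁ q₂ = g at hpos hq₁ hq₂ ⊢
  subst hq₁ hq₂
  have hg : (g : ℤ) ≠ 0 := by exact_mod_cast hpos.ne'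
  rw [show p₁ * (v * g) - p₂ * (u * g) = (p₁ * v - p₂ * u) * g by ring, Int.natAbs_mul,
    Int.natAbs_natCast, Nat.mul_div_cancel _ hpos]
  refine addOrderOf_eq_natAbs_of_zsmul_eq_zero_iff fun k => ?_
  rw [← QuotientAddGroup.mk_zsmul, QuotientAddGroup.eq_zero_iff, Prod.smul_mk, smul_eq_mul,
    smul_zero, mul_one]
  exact mk_zero_mem_closure_pair_iff hg (Int.isCoprime_iff_gcd_eq_one.2 huv)
end

section
/- Assume n = |p₁q₂ − p₂q₁| ≠ 0. Then the index in (ℤ × ℤ)/Λ of the cyclic subgroup generated by the image of (1, 0) equals gcd(|q₁|, |q₂|). (In the language of the paper: the permutation induced by the translation u on the n points of the fundamental region has exactly μ_q = gcd(|q₁|, |q₂|) cycles.) -/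
/-!
Passing to `ℤ × ℤ`, the index of `⟨(1, 0)⟩` in `(ℤ × ℤ) ⧸ Λ` is the index of
`ℤ (1, 0) + Λ`. Since `ℤ (1, 0)` is the kernel of the second projection, this subgroup
is the preimage of the projection of `Λ`, namely of `q₁ ℤ + q₂ ℤ = gcd(q₁, q₂) ℤ`.
-/

namespace AddSubgroup

theorem index_map_mk' {G : Type*} [AddGroup G] (H K : AddSubgroup G) [H.Normal] :
    (K.map (QuotientAddGroup.mk' H)).index = (K ⊔ H).index := by
  rw [index_map, (QuotientAddGroup.mk' H).range_eq_top_of_surjective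
    (QuotientAddGroup.mk'_surjective H), index_top, mul_one, QuotientAddGroup.ker_mk']

theorem index_prod_top_bot_sup {A B : Type*} [AddGroup A] [AddGroup B]
    (K : AddSubgroup (A × B)) :
    ((⊤ : AddSubgroup A).prod ⊥ ⊔ K).index = (K.map (AddMonoidHom.snd A B)).index := by
  rw [← AddMonoidHom.ker_snd, sup_comm, ← comap_map_eq,
    index_comap_of_surjective _ Prod.snd_surjective]

end AddSubgroup

open AddSubgroup

theorem Int.zmultiples_one_zero :
    zmultiples ((1, 0) : ℤ × ℤ) = (⊤ : AddSubgroup ℤ).prod ⊥ := by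
  ext ⟨a, b⟩
  simp [AddSubgroup.mem_zmultiples_iff, mem_prod, eq_comm]

theorem Int.index_map_snd_closure_pair (p₁ q₁ p₂ q₂ : ℤ) :
    ((AddSubgroup.closure {((p₁, q₁) : ℤ × ℤ), (p₂, q₂)}).map (AddMonoidHom.snd ℤ ℤ)).index
      = Int.gcd q₁ q₂ := by
  rw [AddMonoidHom.map_closure, Set.image_pair, AddMonoidHom.coe_snd,
    Int.closure_eq_zmultiples, Int.index_zmultiples, Int.natAbs_natCast]

theorem stmt6_general (p₁ q₁ p₂ q₂ : ℤ) :
    (AddSubgroup.zmultiples ((QuotientAddGroup.mk ((1, 0) : ℤ × ℤ)) :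
        (ℤ × ℤ) ⧸ AddSubgroup.closure {((p₁, q₁) : ℤ × ℤ), (p₂, q₂)})).index
      = Nat.gcd q₁.natAbs q₂.natAbs := by
  set Λ := AddSubgroup.closure {((p₁, q₁) : ℤ × ℤ), (p₂, q₂)}
  have hmap : zmultiples (QuotientAddGroup.mk ((1, 0) : ℤ × ℤ) : (ℤ × ℤ) ⧸ Λ)
      = (zmultiples ((1, 0) : ℤ × ℤ)).map (QuotientAddGroup.mk' Λ) :=
    (AddMonoidHom.map_zmultiples (QuotientAddGroup.mk' Λ) _).symm
  rw [hmap, index_map_mk', Int.zmultiples_one_zero, index_prod_top_bot_sup,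
    Int.index_map_snd_closure_pair]
  rfl

/-- Let `Λ ≤ ℤ × ℤ` be generated by `(p₁, q₁)` and `(p₂, q₂)`, and assume
`n = |p₁q₂ − p₂q₁| ≠ 0`.  Then the index in `(ℤ × ℤ)/Λ` of the cyclic subgroup
generated by the image of `(1, 0)` equals `gcd(|q₁|, |q₂|)`. -/
theorem stmt6 (p₁ q₁ p₂ q₂ : ℤ) (hn : p₁ * q₂ - p₂ * q₁ ≠ 0) :
    (AddSubgroup.zmultiples ((QuotientAddGroup.mk ((1, 0) : ℤ × ℤ)) :
        (ℤ × ℤ) ⧸ AddSubgroup.closure {((p₁, q₁) : ℤ × ℤ), (p₂, q₂)})).index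
      = Nat.gcd q₁.natAbs q₂.natAbs :=
  stmt6_general p₁ q₁ p₂ q₂
end

section
/- Let g ∈ ℝ, let u = (1, 0) and v = (cos g, sin g) in ℝ², and let R₋g denote the rotation of ℝ² about the origin by angle −g. Then for all real numbers p and q, R₋g(p·u + q·v) = (q + 2p·cos g)·u − p·v. Moreover, setting p₂ = q + 2p·cos g and q₂ = −p, one has p·q₂ − p₂·q = −(p² + q² + 2pq·cos g) = −‖p·u + q·v‖². -/
open Real

theorem EuclideanSpace.ext_fin_two {x y : EuclideanSpace ℝ (Fin 2)} (h0 : x 0 = y 0)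
    (h1 : x 1 = y 1) : x = y := by
  ext i
  fin_cases i
  exacts [h0, h1]

theorem EuclideanSpace.real_norm_sq_fin_two (x : EuclideanSpace ℝ (Fin 2)) :
    ‖x‖ ^ 2 = x 0 ^ 2 + x 1 ^ 2 := by
  rw [EuclideanSpace.real_norm_sq_eq, Fin.sum_univ_two]

/-- Let `g ∈ ℝ`, `u = (1, 0)`, `v = (cos g, sin g)` in `ℝ²`, and let `R` be the
rotation about the origin by the angle `−g` (given componentwise by the matrix with
rows `(cos g, sin g)` and `(−sin g, cos g)`).  Then for all reals `p, q`:
`R(p·u + q·v) = (q + 2p·cos g)·u − p·v`, and with `p₂ = q + 2p·cos g`, `q₂ = −p`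
one has `p·q₂ − p₂·q = −(p² + q² + 2pq·cos g) = −‖p·u + q·v‖²`. -/
theorem stmt8 (g p q : ℝ)
    (u v : EuclideanSpace ℝ (Fin 2))
    (hu0 : u 0 = 1) (hu1 : u 1 = 0)
    (hv0 : v 0 = Real.cos g) (hv1 : v 1 = Real.sin g)
    (R : EuclideanSpace ℝ (Fin 2) → EuclideanSpace ℝ (Fin 2))
    (hR : ∀ w : EuclideanSpace ℝ (Fin 2),
      (R w) 0 = Real.cos g * w 0 + Real.sin g * w 1 ∧
      (R w) 1 = -Real.sin g * w 0 + Real.cos g * w 1) :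
    R (p • u + q • v) = (q + 2 * p * Real.cos g) • u - p • v ∧
    p * (-p) - (q + 2 * p * Real.cos g) * q
      = -(p ^ 2 + q ^ 2 + 2 * p * q * Real.cos g) ∧
    -(p ^ 2 + q ^ 2 + 2 * p * q * Real.cos g) = -‖p • u + q • v‖ ^ 2 := by
  have hpyth := sin_sq_add_cos_sq g
  have hw0 : (p • u + q • v) 0 = p + q * cos g := by simp [hu0, hv0]
  have hw1 : (p • u + q • v) 1 = q * sin g := by simp [hu1, hv1]
  obtain ⟨hR0, hR1⟩ := hR (p • u + q • v)
  refine ⟨EuclideanSpace.ext_fin_two ?_ ?_, by ring, ?_⟩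
  · simp only [hR0, hw0, hw1, PiLp.sub_apply, PiLp.smul_apply, smul_eq_mul, hu0, hv0]
    linear_combination q * hpyth
  · simp only [hR1, hw0, hw1, PiLp.sub_apply, PiLp.smul_apply, smul_eq_mul, hu1, hv1]
    ring
  · rw [EuclideanSpace.real_norm_sq_fin_two, hw0, hw1]
    linear_combination q ^ 2 * hpyth
end

section
/- Let p, q be integers, not both zero, and let Λ be the subgroup of ℤ × ℤ generated by (p, q) and (p + q, −p). Let T : ℤ × ℤ → ℤ × ℤ be the group automorphism T(x, y) = (x + y, −x) (which, in the basis u = (1,0), v = (1/2, √3/2) of the triangular lattice, represents the rotation of the plane by the angle −π/3). Then T maps Λ onto Λ, and the quotient group (ℤ × ℤ)/Λ has exactly p² + pq + q² elements. (This is the case g = π/3 of the equilateral sublattices: the index of an equilateral sublattice of the triangular lattice is n = p² + pq + q².) -/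
/-!
The vectors `v = (p, q)` and `T v = (p + q, -p)` span `Λ`, and `T² = T - 1`, so
`T (T v) = T v - v ∈ Λ`: hence `T Λ = Λ`. The index of a full-rank lattice in `ℤ²` is the
absolute value of the determinant of a basis, here `-(p² + pq + q²)`; this determinant is nonzero
because `4 (p² + pq + q²) = (2p + q)² + 3q²`.
-/

namespace AddSubgroup

theorem map_closure_pair_eq {G : Type*} [AddCommGroup G] (f : G →+ G) (v : G)
    (hf : f (f v) = f v - v) :
    (closure {v, f v}).map f = closure {v, f v} := by
  rw [AddMonoidHom.map_closure, Set.image_pair, hf]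
  refine le_antisymm (closure_le _ |>.mpr ?_) (closure_le _ |>.mpr ?_)
  · rintro _ (h | h) <;> rw [h]
    · exact subset_closure (by simp)
    · exact sub_mem (subset_closure (by simp)) (subset_closure (by simp))
  · rintro _ (h | h) <;> rw [h]
    · rw [← sub_sub_cancel (f v) v]
      exact sub_mem (subset_closure (by simp)) (subset_closure (by simp))
    · exact subset_closure (by simp)

theorem card_quotient_closure_pair_eq_abs_det (v w : ℤ × ℤ) (h : v.1 * w.2 - v.2 * w.1 ≠ 0) :
    (Nat.card ((ℤ × ℤ) ⧸ closure {v, w}) : ℤ) = |v.1 * w.2 - v.2 * w.1| := by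
  have hli : LinearIndependent ℤ ![v, w] := by
    refine LinearIndependent.pair_iff.mpr fun s t hst => ?_
    simp only [Prod.ext_iff, Prod.smul_fst, Prod.smul_snd, Prod.fst_add, Prod.snd_add,
      smul_eq_mul, Prod.fst_zero, Prod.snd_zero] at hst
    constructor
    · refine (mul_eq_zero.mp ?_).resolve_right h
      linear_combination w.2 * hst.1 - w.1 * hst.2
    · refine (mul_eq_zero.mp ?_).resolve_right h
      linear_combination v.1 * hst.2 - v.2 * hst.1
  let Λ := (Submodule.span ℤ (Set.range ![v, w])).toAddSubgroup
  have hΛ : closure {v, w} = Λ := by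
    rw [← Matrix.range_cons_cons_empty v w ![]]
    exact (Submodule.span_int_eq_addSubgroupClosure _).symm
  let bΛ : Module.Basis (Fin 2) ℤ Λ := Module.Basis.span hli
  have hbΛ (i : Fin 2) : (bΛ i : ℤ × ℤ) = ![v, w] i := Module.Basis.coe_span_apply hli i
  rw [hΛ, ← index, index_eq_natAbs_det (Module.Basis.finTwoProd ℤ) Λ bΛ, Int.natCast_natAbs,
    Module.Basis.det_apply, Matrix.det_fin_two]
  simp [Module.Basis.toMatrix_apply, hbΛ, mul_comm]

end AddSubgroup

theorem sq_add_mul_add_sq_pos {R : Type*} [CommRing R] [LinearOrder R] [IsStrictOrderedRing R]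
    {a b : R} (h : ¬(a = 0 ∧ b = 0)) : 0 < a ^ 2 + a * b + b ^ 2 := by
  by_cases hb : b = 0
  · subst hb
    have ha : a ≠ 0 := fun ha => h ⟨ha, rfl⟩
    simpa using pow_pos (abs_pos.mpr ha) 2
  · nlinarith [sq_nonneg (2 * a + b), pow_pos (abs_pos.mpr hb) 2, sq_abs b]

/-- Let `p, q` be integers, not both zero, and let `Λ ≤ ℤ × ℤ` be generated by
`(p, q)` and `(p + q, −p)`.  Let `T(x, y) = (x + y, −x)` (rotation by `−π/3` in the
triangular-lattice basis).  Then `T` maps `Λ` onto `Λ` and `(ℤ × ℤ)/Λ` has exactly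
`p² + pq + q²` elements. -/
theorem stmt9 (p q : ℤ) (hpq : ¬(p = 0 ∧ q = 0))
    (T : (ℤ × ℤ) ≃+ (ℤ × ℤ)) (hT : ∀ x y : ℤ, T (x, y) = (x + y, -x)) :
    AddSubgroup.map T.toAddMonoidHom
        (AddSubgroup.closure {((p, q) : ℤ × ℤ), (p + q, -p)})
      = AddSubgroup.closure {((p, q) : ℤ × ℤ), (p + q, -p)} ∧
    (Nat.card ((ℤ × ℤ) ⧸ AddSubgroup.closure {((p, q) : ℤ × ℤ), (p + q, -p)}) : ℤ)
      = p ^ 2 + p * q + q ^ 2 := by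
  have hTv : T.toAddMonoidHom (p, q) = (p + q, -p) := hT p q
  have hTTv : T.toAddMonoidHom (T.toAddMonoidHom (p, q)) = T.toAddMonoidHom (p, q) - (p, q) := by
    simp only [AddEquiv.toAddMonoidHom_eq_coe, AddMonoidHom.coe_coe, hT, Prod.mk_sub_mk]
    ext <;> ring
  have hN := sq_add_mul_add_sq_pos hpq
  have hdet : p * -p - q * (p + q) = -(p ^ 2 + p * q + q ^ 2) := by ring
  constructor
  · simpa only [hTv] using AddSubgroup.map_closure_pair_eq _ _ hTTv
  · rw [AddSubgroup.card_quotient_closure_pair_eq_abs_det (p, q) (p + q, -p) (hdet ▸ neg_ne_zero.mpr hN.ne'),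
      hdet, abs_neg, abs_of_pos hN]
end

section
/- Let n ≥ 1 and let a and d be permutations of an n-element set, each of order exactly 2, satisfying the braid relation a·d·a = d·a·d, and suppose that the subgroup generated by a and d acts transitively on the n points. Then n ∈ {2, 3, 6}. (This is the classification of the possible degrees n in the order-2 case of the wallpaper group p6: n = 2 with a = d = (1 2); n = 3 with a = (1 2), d = (1 3); n = 6 with a = (1 2)(3 4)(5 6), d = (1 3)(2 5)(4 6).) -/
/-- Let `n ≥ 1` and let `a`, `d` be permutations of an `n`-element set, each of order
exactly `2`, satisfying the braid relation `a·d·a = d·a·d`, such that the subgroup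
generated by `a` and `d` acts transitively on the `n` points.  Then `n ∈ {2, 3, 6}`. -/
theorem stmt14 (n : ℕ) (hn : 1 ≤ n) (a d : Equiv.Perm (Fin n))
    (ha : orderOf a = 2) (hd : orderOf d = 2)
    (hbraid : a * d * a = d * a * d)
    (htrans : ∀ x y : Fin n,
      ∃ g ∈ Subgroup.closure ({a, d} : Set (Equiv.Perm (Fin n))), g x = y) :
    n = 2 ∨ n = 3 ∨ n = 6 := by
  classical
  have ha2 : a * a = 1 := by have h := pow_orderOf_eq_one a; rwa [ha, pow_two] at h
  have hd2 : d * d = 1 := by have h := pow_orderOf_eq_one d; rwa [hd, pow_two] at h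
  have haa : ∀ x, a * (a * x) = x := fun x => by rw [← mul_assoc, ha2, one_mul]
  have hdd : ∀ x, d * (d * x) = x := fun x => by rw [← mul_assoc, hd2, one_mul]
  have hbr : a * (d * a) = d * (a * d) := by
    rw [← mul_assoc, hbraid, mul_assoc]
  have hbr' : ∀ x, a * (d * (a * x)) = d * (a * (d * x)) := fun x => by
    rw [← mul_assoc, ← mul_assoc, ← mul_assoc, ← mul_assoc, hbraid]
  set S : Set (Equiv.Perm (Fin n)) := {1, a, d, a*d, d*a, a*d*a} with hS
  have hmul : ∀ x ∈ S, ∀ y ∈ S, x*y ∈ S := by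
    intro x hx y hy
    simp only [hS, Set.mem_insert_iff, Set.mem_singleton_iff] at hx hy ⊢
    rcases hx with rfl|rfl|rfl|rfl|rfl|rfl <;> rcases hy with rfl|rfl|rfl|rfl|rfl|rfl <;>
      simp [mul_assoc, ha2, hd2, haa, hdd, hbr, hbr']
  have hinv : ∀ x ∈ S, x⁻¹ ∈ S := by
    intro x hx
    simp only [hS, Set.mem_insert_iff, Set.mem_singleton_iff] at hx ⊢
    rcases hx with rfl|rfl|rfl|rfl|rfl|rfl
    · left; simp
    · right; left; exact inv_eq_of_mul_eq_one_right ha2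
    · right; right; left; exact inv_eq_of_mul_eq_one_right hd2
    · right; right; right; right; left
      exact inv_eq_of_mul_eq_one_right (by simp [mul_assoc, ha2, hd2, haa, hdd])
    · right; right; right; left
      exact inv_eq_of_mul_eq_one_right (by simp [mul_assoc, ha2, hd2, haa, hdd])
    · right; right; right; right; right
      exact inv_eq_of_mul_eq_one_right (by simp [mul_assoc, ha2, hd2, haa, hdd, hbr, hbr'])
  let H : Subgroup (Equiv.Perm (Fin n)) :=
    { carrier := S
      one_mem' := by simp [hS]
      mul_mem' := fun hx hy => hmul _ hx _ hy
      inv_mem' := fun hx => hinv _ hx }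
  set G : Subgroup (Equiv.Perm (Fin n)) := Subgroup.closure ({a, d} : Set _) with hG
  have hGH : G ≤ H := by
    rw [hG, Subgroup.closure_le]
    intro x hx
    rcases hx with rfl | hx
    · right; left; rfl
    · rcases hx with rfl; right; right; left; rfl
  have hcardS : S.ncard ≤ 6 := by
    rw [hS]
    refine le_trans (Set.ncard_insert_le _ _) ?_
    refine le_trans (Nat.add_le_add_right (Set.ncard_insert_le _ _) 1) ?_
    refine le_trans (Nat.add_le_add_right (Nat.add_le_add_right (Set.ncard_insert_le _ _) 1) 1) ?_
    refine le_trans (Nat.add_le_add_right (Nat.add_le_add_right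
      (Nat.add_le_add_right (Set.ncard_insert_le _ _) 1) 1) 1) ?_
    refine le_trans (Nat.add_le_add_right (Nat.add_le_add_right (Nat.add_le_add_right
      (Nat.add_le_add_right (Set.ncard_insert_le _ _) 1) 1) 1) 1) ?_
    have : ({a*d*a} : Set (Equiv.Perm (Fin n))).ncard = 1 := Set.ncard_singleton _
    omega
  have hcardG : Nat.card G ≤ 6 := by
    calc Nat.card G ≤ Nat.card H := Subgroup.card_le_of_le hGH
      _ = S.ncard := by rw [← Nat.card_coe_set_eq]; rfl
      _ ≤ 6 := hcardS
  have haG : a ∈ G := Subgroup.subset_closure (by left; rfl)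
  have hdG : d ∈ G := Subgroup.subset_closure (by right; rfl)
  have h2 : 2 ∣ Nat.card G := ha ▸ G.orderOf_dvd_natCard haG
  -- n divides Nat.card G via orbit-stabilizer
  have hx0 : (0 : ℕ) < n := hn
  let x0 : Fin n := ⟨0, hx0⟩
  have horb : MulAction.orbit G x0 = Set.univ := by
    ext y
    simp only [Set.mem_univ, iff_true, MulAction.mem_orbit_iff]
    obtain ⟨g, hg, hgy⟩ := htrans x0 y
    exact ⟨⟨g, hg⟩, hgy⟩
  have hndvd : n ∣ Nat.card G := by
    have he := MulAction.orbitProdStabilizerEquivGroup G x0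
    have hcard := Nat.card_congr he
    rw [Nat.card_prod] at hcard
    have hno : Nat.card (MulAction.orbit G x0) = n := by
      rw [horb, Nat.card_coe_set_eq, Set.ncard_univ, Nat.card_eq_fintype_card,
        Fintype.card_fin]
    exact ⟨Nat.card (MulAction.stabilizer G x0), by rw [← hcard, hno]⟩
  have hn1 : n ≠ 1 := by
    rintro rfl
    have : a = 1 := Subsingleton.elim a 1
    rw [this, orderOf_one] at ha
    omega
  have hdvd6 : n ∣ 6 := by
    by_cases had : a * d = 1
    · -- then d = a and G = zpowers a has cardinality 2
      have hda : d = a := by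
        have : a⁻¹ = a := inv_eq_of_mul_eq_one_right ha2
        calc d = a⁻¹ * (a * d) := by rw [← mul_assoc, inv_mul_cancel, one_mul]
          _ = a := by rw [had, mul_one, this]
      have hGa : G = Subgroup.zpowers a := by
        rw [hG, hda]
        simp [Subgroup.zpowers_eq_closure]
      have : Nat.card G = 2 := by
        rw [hGa, Nat.card_zpowers, ha]
      exact dvd_trans (this ▸ hndvd) (by norm_num)
    · have h3pow : (a * d) ^ 3 = 1 := by
        show a * d * (a * d) * (a * d) = 1
        simp [mul_assoc, ha2, hd2, haa, hdd, hbr, hbr']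
      have h3 : orderOf (a * d) = 3 := by
        have hdvd := orderOf_dvd_of_pow_eq_one h3pow
        rcases (Nat.prime_three).eq_one_or_self_of_dvd _ hdvd with h | h
        · exact absurd (orderOf_eq_one_iff.mp h) had
        · exact h
      have hadG : a * d ∈ G := mul_mem haG hdG
      have h3' : 3 ∣ Nat.card G := h3 ▸ G.orderOf_dvd_natCard hadG
      have h6 : 6 ∣ Nat.card G := by
        have : (2 : ℕ).Coprime 3 := by norm_num
        exact this.mul_dvd_of_dvd_of_dvd h2 h3'
      have hpos : 0 < Nat.card G := Nat.card_pos
      have : Nat.card G = 6 := le_antisymm hcardG (Nat.le_of_dvd hpos h6)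
      exact this ▸ hndvd
  have hle : n ≤ 6 := Nat.le_of_dvd (by norm_num) hdvd6
  interval_cases n <;> revert hdvd6 hn1 <;> decide
end
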